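/- Let λ be a real constant and let f : ℝⁿ → ℝ be a smooth function satisfying Σ_{i,j} g^{ij} f_{ij} = -f + Σ_i x_i f_i + λ√(1+|Df|²) on ℝⁿ. Then for every index p and every point of ℝⁿ, the third derivatives of f satisfy Σ_{i,j} g^{ij} f_{ijp} = ⟨x, Df_p⟩ + λ Σ_i f_i f_{ip}/√(1+|Df|²) + 2 Σ_{i,j,k,l} g^{ik} g^{jl} f_{kp} f_l f_{ij}, where Df_p = (f_{p1},…,f_{pn}). -/

import Mathlib

/-- The `i`-th partial derivative of a function `f : ℝⁿ → ℝ`. -/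
noncomputable def pd {n : ℕ} (f : (Fin n → ℝ) → ℝ) (i : Fin n) (x : Fin n → ℝ) : ℝ :=
  fderiv ℝ f x (Pi.single i 1)

/-- The induced metric `g_{ij} = δ_{ij} + f_i f_j` of the graph of `f`. -/
noncomputable def gMat {n : ℕ} (f : (Fin n → ℝ) → ℝ) (x : Fin n → ℝ) :
    Matrix (Fin n) (Fin n) ℝ :=
  Matrix.of fun i j => (if i = j then (1 : ℝ) else 0) + pd f i x * pd f j x

/-- The inverse metric `(g^{ij})`. -/
noncomputable def gInv {n : ℕ} (f : (Fin n → ℝ) → ℝ) (x : Fin n → ℝ) :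
    Matrix (Fin n) (Fin n) ℝ :=
  (gMat f x)⁻¹

section PdCalculus
variable {n : ℕ} {g h : (Fin n → ℝ) → ℝ} {p : Fin n} {x : Fin n → ℝ}

theorem pd_add (hg : DifferentiableAt ℝ g x) (hh : DifferentiableAt ℝ h x) :
    pd (fun y => g y + h y) p x = pd g p x + pd h p x := by
  simp [pd, fderiv_fun_add hg hh]

theorem pd_sub (hg : DifferentiableAt ℝ g x) (hh : DifferentiableAt ℝ h x) :
    pd (fun y => g y - h y) p x = pd g p x - pd h p x := by
  simp [pd, fderiv_fun_sub hg hh]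

theorem pd_mul (hg : DifferentiableAt ℝ g x) (hh : DifferentiableAt ℝ h x) :
    pd (fun y => g y * h y) p x = pd g p x * h x + g x * pd h p x := by
  simp [pd, fderiv_fun_mul hg hh]; ring

theorem pd_sum {ι : Type*} (s : Finset ι) (F : ι → (Fin n → ℝ) → ℝ)
    (hF : ∀ i ∈ s, DifferentiableAt ℝ (F i) x) :
    pd (fun y => ∑ i ∈ s, F i y) p x = ∑ i ∈ s, pd (F i) p x := by
  simp [pd, fderiv_fun_sum hF]

theorem pd_neg : pd (fun y => -g y) p x = -pd g p x := by
  simp [pd, fderiv_neg]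

theorem pd_const (c : ℝ) : pd (fun _ => c) p x = 0 := by
  simp [pd]

theorem pd_const_mul (hg : DifferentiableAt ℝ g x) (c : ℝ) :
    pd (fun y => c * g y) p x = c * pd g p x := by
  simp [pd, fderiv_const_mul hg c]

theorem pd_inv (hh : DifferentiableAt ℝ h x) (hx : h x ≠ 0) :
    pd (fun y => (h y)⁻¹) p x = -pd h p x / h x ^ 2 := by
  have H : HasFDerivAt (fun y => (h y)⁻¹) ((-(h x ^ 2)⁻¹) • fderiv ℝ h x) x :=
    (hasDerivAt_inv hx).comp_hasFDerivAt x hh.hasFDerivAt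
  rw [pd, H.fderiv]
  simp [pd]
  ring

theorem pd_div (hg : DifferentiableAt ℝ g x) (hh : DifferentiableAt ℝ h x) (hx : h x ≠ 0) :
    pd (fun y => g y / h y) p x = (pd g p x * h x - g x * pd h p x) / h x ^ 2 := by
  have : (fun y => g y / h y) = fun y => g y * (h y)⁻¹ := by ext y; rw [div_eq_mul_inv]
  rw [this, pd_mul (h := fun y => (h y)⁻¹) hg (hh.inv hx), pd_inv hh hx]
  field_simp
  ring

theorem pd_sqrt (hh : DifferentiableAt ℝ h x) (hx : h x ≠ 0) :
    pd (fun y => Real.sqrt (h y)) p x = pd h p x / (2 * Real.sqrt (h x)) := by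
  have H := hh.hasFDerivAt.sqrt hx
  rw [pd, H.fderiv]
  simp [pd]
  ring

theorem pd_coord (i : Fin n) : pd (fun y => y i) p x = if i = p then 1 else 0 := by
  have : (fun y : Fin n → ℝ => y i) = (ContinuousLinearMap.proj i : (Fin n → ℝ) →L[ℝ] ℝ) := rfl
  rw [pd, this, ContinuousLinearMap.fderiv]
  simp [Pi.single_apply]

theorem pd_sq (hg : DifferentiableAt ℝ g x) :
    pd (fun y => g y ^ 2) p x = 2 * g x * pd g p x := by
  have : (fun y => g y ^ 2) = fun y => g y * g y := by ext y; ring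
  rw [this, pd_mul hg hg]; ring

end PdCalculus

section Smooth
variable {n : ℕ} {f : (Fin n → ℝ) → ℝ}

theorem contDiff_pd (hf : ContDiff ℝ (⊤ : ℕ∞) f) (i : Fin n) : ContDiff ℝ (⊤ : ℕ∞) (pd f i) :=
  (hf.fderiv_right (by simp)).clm_apply contDiff_const

theorem pd_pd_comm (hf : ContDiff ℝ (⊤ : ℕ∞) f) (a b : Fin n) (x : Fin n → ℝ) :
    pd (pd f a) b x = pd (pd f b) a x := by
  have hsymm : IsSymmSndFDerivAt ℝ f x :=
    hf.contDiffAt.isSymmSndFDerivAt (by simp; exact WithTop.coe_le_coe.mpr le_top)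
  have hdf : Differentiable ℝ (fderiv ℝ f) :=
    (hf.fderiv_right (m := 1) (WithTop.coe_le_coe.mpr le_top)).differentiable one_ne_zero
  have key : ∀ a b : Fin n, pd (pd f a) b x
      = fderiv ℝ (fderiv ℝ f) x (Pi.single b 1) (Pi.single a 1) := by
    intro a b
    unfold pd
    rw [fderiv_clm_apply (hdf x) (differentiableAt_const _)]
    simp
  rw [key, key, hsymm.eq]

end Smooth

theorem gInv_apply {n : ℕ} (f : (Fin n → ℝ) → ℝ) (x : Fin n → ℝ) (i j : Fin n) :
    gInv f x i j
      = (if i = j then (1 : ℝ) else 0)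
        - pd f i x * pd f j x / (1 + ∑ k, (pd f k x) ^ 2) := by
  have hS : (0:ℝ) < 1 + ∑ k, (pd f k x) ^ 2 := by positivity
  set S := 1 + ∑ k, (pd f k x) ^ 2 with hSdef
  have hS0 : S ≠ 0 := ne_of_gt hS
  have key : gMat f x * Matrix.of (fun i j =>
      (if i = j then (1 : ℝ) else 0) - pd f i x * pd f j x / S) = 1 := by
    ext i j
    simp only [Matrix.mul_apply, gMat, Matrix.of_apply, Matrix.one_apply]
    have expand : ∀ k : Fin n,
        ((if i = k then (1 : ℝ) else 0) + pd f i x * pd f k x)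
          * ((if k = j then (1 : ℝ) else 0) - pd f k x * pd f j x / S)
        = ((if i = k then (1:ℝ) else 0) * (if k = j then (1:ℝ) else 0)
            + (if k = j then (1:ℝ) else 0) * (pd f i x * pd f k x))
          - ((if i = k then (1:ℝ) else 0) * (pd f k x * pd f j x / S)
            + pd f i x * pd f j x / S * (pd f k x)^2) := by
      intro k; ring
    rw [Finset.sum_congr rfl (fun k _ => expand k)]
    rw [Finset.sum_sub_distrib, Finset.sum_add_distrib, Finset.sum_add_distrib]
    have e1 : ∑ k, (if i = k then (1:ℝ) else 0) * (if k = j then (1:ℝ) else 0)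
        = if i = j then 1 else 0 := by
      simp [Finset.sum_ite_eq]
    have e2 : ∑ k, (if k = j then (1:ℝ) else 0) * (pd f i x * pd f k x)
        = pd f i x * pd f j x := by
      simp [Finset.sum_ite_eq']
    have e3 : ∑ k, (if i = k then (1:ℝ) else 0) * (pd f k x * pd f j x / S)
        = pd f i x * pd f j x / S := by
      simp [Finset.sum_ite_eq]
    have e4 : ∑ k, pd f i x * pd f j x / S * (pd f k x)^2
        = pd f i x * pd f j x / S * (S - 1) := by
      rw [← Finset.mul_sum]
      congr 1
      rw [hSdef]; ring
    rw [e1, e2, e3, e4]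
    split_ifs with hij <;> field_simp <;> ring
  rw [gInv, Matrix.inv_eq_right_inv key]
  rfl

theorem main_algebra {n : ℕ} (a c : Fin n → ℝ) (b t : Fin n → Fin n → ℝ)
    (hb : ∀ i j, b i j = b j i)
    (S : ℝ) (hS : S = 1 + ∑ k, a k ^ 2) (hS0 : S ≠ 0)
    (sq lam : ℝ) (hsq : sq ≠ 0) (X ap P : ℝ) (hP : P = ∑ k, a k * c k)
    (h : ∑ i, ∑ j, ((0 - ((c i * a j + a i * c j) * S - a i * a j * (2 * P)) / S ^ 2) * b i j
          + ((if i = j then (1:ℝ) else 0) - a i * a j / S) * t i j)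
        = -ap + (ap + X) + lam * (2 * P / (2 * sq))) :
    ∑ i, ∑ j, ((if i = j then (1:ℝ) else 0) - a i * a j / S) * t i j
      = X + lam * P / sq
        + 2 * ∑ i, ∑ j, ∑ k, ∑ l,
            ((if i = k then (1:ℝ) else 0) - a i * a k / S)
              * ((if j = l then (1:ℝ) else 0) - a j * a l / S)
              * c k * a l * b i j := by
  have hsum_sq : ∑ l, a l ^ 2 = S - 1 := by rw [hS]; ring
  have hcol1 : ∀ j : Fin n,
      ∑ l, ((if j = l then (1:ℝ) else 0) - a j * a l / S) * a l = a j / S := by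
    intro j
    have e : ∀ l : Fin n, ((if j = l then (1:ℝ) else 0) - a j * a l / S) * a l
        = (if j = l then a l else 0) - a j / S * a l ^ 2 := by
      intro l; split_ifs <;> ring
    rw [Finset.sum_congr rfl fun l _ => e l, Finset.sum_sub_distrib, ← Finset.mul_sum,
      hsum_sq]
    simp [Finset.sum_ite_eq]
    field_simp
    ring
  have hcol2 : ∀ i : Fin n,
      ∑ k, ((if i = k then (1:ℝ) else 0) - a i * a k / S) * c k = c i - a i * P / S := by
    intro i
    have e : ∀ k : Fin n, ((if i = k then (1:ℝ) else 0) - a i * a k / S) * c k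
        = (if i = k then c k else 0) - a i / S * (a k * c k) := by
      intro k; split_ifs <;> ring
    rw [Finset.sum_congr rfl fun k _ => e k, Finset.sum_sub_distrib, ← Finset.mul_sum, ← hP]
    simp [Finset.sum_ite_eq]
    ring
  have hquad : ∀ i j : Fin n,
      ∑ k, ∑ l, ((if i = k then (1:ℝ) else 0) - a i * a k / S)
          * ((if j = l then (1:ℝ) else 0) - a j * a l / S) * c k * a l * b i j
        = (c i - a i * P / S) * (a j / S) * b i j := by
    intro i j
    have e : ∀ k : Fin n,
        ∑ l, ((if i = k then (1:ℝ) else 0) - a i * a k / S)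
            * ((if j = l then (1:ℝ) else 0) - a j * a l / S) * c k * a l * b i j
          = (((if i = k then (1:ℝ) else 0) - a i * a k / S) * c k)
              * ((∑ l, ((if j = l then (1:ℝ) else 0) - a j * a l / S) * a l) * b i j) := by
      intro k
      rw [Finset.sum_mul, Finset.mul_sum]
      exact Finset.sum_congr rfl fun l _ => by ring
    rw [Finset.sum_congr rfl fun k _ => e k, ← Finset.sum_mul, hcol1 j, hcol2 i]
    ring
  have hsplit : ∑ i, ∑ j, ((0 - ((c i * a j + a i * c j) * S - a i * a j * (2 * P)) / S ^ 2) * b i j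
          + ((if i = j then (1:ℝ) else 0) - a i * a j / S) * t i j)
      = (∑ i, ∑ j, (0 - ((c i * a j + a i * c j) * S - a i * a j * (2 * P)) / S ^ 2) * b i j)
        + ∑ i, ∑ j, ((if i = j then (1:ℝ) else 0) - a i * a j / S) * t i j := by
    rw [← Finset.sum_add_distrib]
    exact Finset.sum_congr rfl fun i _ => by rw [← Finset.sum_add_distrib]
  rw [hsplit] at h
  have hswap : ∑ i, ∑ j, a i * c j * b i j = ∑ i, ∑ j, c i * a j * b i j := by
    rw [Finset.sum_comm]
    exact Finset.sum_congr rfl fun i _ => Finset.sum_congr rfl fun j _ => by rw [hb j i]; ring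
  have hD : ∑ i, ∑ j, (0 - ((c i * a j + a i * c j) * S - a i * a j * (2 * P)) / S ^ 2) * b i j
      = -(2 / S) * (∑ i, ∑ j, c i * a j * b i j)
        + (2 * P / S ^ 2) * (∑ i, ∑ j, a i * a j * b i j) := by
    have e : ∀ i j : Fin n,
        (0 - ((c i * a j + a i * c j) * S - a i * a j * (2 * P)) / S ^ 2) * b i j
          = -(1 / S) * (c i * a j * b i j) + (-(1 / S)) * (a i * c j * b i j)
            + (2 * P / S ^ 2) * (a i * a j * b i j) := by
      intro i j; field_simp; ring
    calc ∑ i, ∑ j, (0 - ((c i * a j + a i * c j) * S - a i * a j * (2 * P)) / S ^ 2) * b i j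
        = ∑ i, ∑ j, (-(1 / S) * (c i * a j * b i j) + (-(1 / S)) * (a i * c j * b i j)
            + (2 * P / S ^ 2) * (a i * a j * b i j)) :=
          Finset.sum_congr rfl fun i _ => Finset.sum_congr rfl fun j _ => e i j
      _ = -(1 / S) * (∑ i, ∑ j, c i * a j * b i j) + (-(1 / S)) * (∑ i, ∑ j, a i * c j * b i j)
            + (2 * P / S ^ 2) * (∑ i, ∑ j, a i * a j * b i j) := by
          simp only [Finset.mul_sum, Finset.sum_add_distrib]
      _ = -(2 / S) * (∑ i, ∑ j, c i * a j * b i j)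
            + (2 * P / S ^ 2) * (∑ i, ∑ j, a i * a j * b i j) := by
          rw [hswap]; ring
  have hQ : ∑ i, ∑ j, ∑ k, ∑ l,
        ((if i = k then (1:ℝ) else 0) - a i * a k / S)
          * ((if j = l then (1:ℝ) else 0) - a j * a l / S) * c k * a l * b i j
      = (1 / S) * (∑ i, ∑ j, c i * a j * b i j)
        - (P / S ^ 2) * (∑ i, ∑ j, a i * a j * b i j) := by
    calc ∑ i, ∑ j, ∑ k, ∑ l, ((if i = k then (1:ℝ) else 0) - a i * a k / S)
            * ((if j = l then (1:ℝ) else 0) - a j * a l / S) * c k * a l * b i j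
        = ∑ i, ∑ j, ((c i - a i * P / S) * (a j / S) * b i j) :=
          Finset.sum_congr rfl fun i _ => Finset.sum_congr rfl fun j _ => hquad i j
      _ = ∑ i, ∑ j, ((1 / S) * (c i * a j * b i j) - (P / S ^ 2) * (a i * a j * b i j)) :=
          Finset.sum_congr rfl fun i _ => Finset.sum_congr rfl fun j _ => by field_simp
      _ = (1 / S) * (∑ i, ∑ j, c i * a j * b i j)
            - (P / S ^ 2) * (∑ i, ∑ j, a i * a j * b i j) := by
          simp only [Finset.mul_sum, Finset.sum_sub_distrib]
  have hgoalsum : ∑ i, ∑ j, ((if i = j then (1:ℝ) else 0) - a i * a j / S) * t i j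
      = -ap + (ap + X) + lam * (2 * P / (2 * sq))
        - (-(2 / S) * (∑ i, ∑ j, c i * a j * b i j)
            + (2 * P / S ^ 2) * (∑ i, ∑ j, a i * a j * b i j)) := by
    rw [← hD]; linarith [h]
  rw [hgoalsum, hQ]
  field_simp
  ring

/-- For an entire smooth solution of the graphic `λ`-hypersurface equation, the third
derivatives satisfy
`Σ_{i,j} g^{ij} f_{ijp} = ⟨x, Df_p⟩ + λ Σ_i f_i f_{ip}/√(1+|Df|²)
  + 2 Σ_{i,j,k,l} g^{ik} g^{jl} f_{kp} f_l f_{ij}`. -/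
theorem lambda_hypersurface_third_derivative_identity
    {n : ℕ} (lam : ℝ) (f : (Fin n → ℝ) → ℝ) (hf : ContDiff ℝ (⊤ : ℕ∞) f)
    (heq : ∀ x : Fin n → ℝ,
      ∑ i, ∑ j, gInv f x i j * pd (pd f j) i x
        = -f x + ∑ i, x i * pd f i x
          + lam * Real.sqrt (1 + ∑ i, (pd f i x) ^ 2)) :
    ∀ (p : Fin n) (x : Fin n → ℝ),
      ∑ i, ∑ j, gInv f x i j * pd (pd (pd f p) j) i x
        = (∑ i, x i * pd (pd f p) i x)
          + lam * (∑ i, pd f i x * pd (pd f p) i x) / Real.sqrt (1 + ∑ i, (pd f i x) ^ 2)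
          + 2 * ∑ i, ∑ j, ∑ k, ∑ l,
              gInv f x i k * gInv f x j l * pd (pd f p) k x * pd f l x * pd (pd f j) i x := by
  intro p x
  -- differentiability facts
  have hud : ∀ i, ContDiff ℝ (⊤ : ℕ∞) (pd f i) := contDiff_pd hf
  have hu : ∀ i, Differentiable ℝ (pd f i) := fun i => (hud i).differentiable (by simp)
  have hB : ∀ i j : Fin n, Differentiable ℝ (pd (pd f j) i) :=
    fun i j => (contDiff_pd (hud j) i).differentiable (by simp)
  have hfd : Differentiable ℝ f := hf.differentiable (by simp)
  have hSd : Differentiable ℝ (fun y => 1 + ∑ k, pd f k y ^ 2) :=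
    (differentiable_const _).add (Differentiable.fun_sum fun k _ => (hu k).pow 2)
  have hS0 : ∀ y : Fin n → ℝ, (1 + ∑ k, pd f k y ^ 2) ≠ 0 := fun y => by positivity
  have hsqrt0 : Real.sqrt (1 + ∑ k, pd f k x ^ 2) ≠ 0 := by positivity
  have hprod : ∀ i j : Fin n, Differentiable ℝ (fun y => pd f i y * pd f j y) :=
    fun i j => (hu i).mul (hu j)
  have hdivD : ∀ (i j : Fin n) (y : Fin n → ℝ), DifferentiableAt ℝ
      (fun y => pd f i y * pd f j y / (1 + ∑ k, pd f k y ^ 2)) y := by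
    intro i j y
    rw [show (fun y => pd f i y * pd f j y / (1 + ∑ k, pd f k y ^ 2))
        = fun y => (pd f i y * pd f j y) * ((1 + ∑ k, pd f k y ^ 2))⁻¹ from
      funext fun y => div_eq_mul_inv _ _]
    exact (hprod i j y).mul (DifferentiableAt.inv (hSd y) (hS0 y))
  have hEd : ∀ i j : Fin n, Differentiable ℝ (fun y =>
      (if i = j then (1:ℝ) else 0) - pd f i y * pd f j y / (1 + ∑ k, pd f k y ^ 2)) :=
    fun i j => (differentiable_const _).sub fun y => hdivD i j y
  have hcoord : ∀ i : Fin n, Differentiable ℝ (fun y : Fin n → ℝ => y i) :=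
    fun i => (ContinuousLinearMap.proj i : (Fin n → ℝ) →L[ℝ] ℝ).differentiable
  -- symmetry facts
  have h2fun : ∀ a b : Fin n, pd (pd f a) b = pd (pd f b) a :=
    fun a b => funext fun y => pd_pd_comm hf a b y
  have h2 : ∀ i : Fin n, pd (pd f p) i x = pd (pd f i) p x := fun i => pd_pd_comm hf p i x
  have h3 : ∀ i j : Fin n, pd (pd (pd f p) j) i x = pd (pd (pd f j) i) p x := by
    intro i j
    rw [h2fun p j]
    exact pd_pd_comm (hud j) p i x
  have hbsym : ∀ i j : Fin n, pd (pd f j) i x = pd (pd f i) j x :=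
    fun i j => pd_pd_comm hf j i x
  -- derivative of S
  have hpdS : pd (fun y => 1 + ∑ k, pd f k y ^ 2) p x
      = 2 * ∑ k, pd f k x * pd (pd f k) p x := by
    have e1 : pd (fun y => 1 + ∑ k, pd f k y ^ 2) p x
        = pd (fun _ => (1:ℝ)) p x + pd (fun y => ∑ k, pd f k y ^ 2) p x :=
      pd_add (differentiableAt_const _) ((Differentiable.fun_sum fun k _ => (hu k).pow 2) x)
    have e2 : pd (fun y => ∑ k, pd f k y ^ 2) p x = ∑ k, pd (fun y => pd f k y ^ 2) p x :=
      pd_sum _ _ fun k _ => ((hu k) x).pow 2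
    have e3 : ∀ k : Fin n, pd (fun y => pd f k y ^ 2) p x
        = 2 * pd f k x * pd (pd f k) p x := fun k => pd_sq ((hu k) x)
    rw [e1, e2, pd_const, Finset.sum_congr rfl fun k _ => e3 k, zero_add, Finset.mul_sum]
    exact Finset.sum_congr rfl fun k _ => by ring
  -- derivative of the inverse-metric entries
  have hpdE : ∀ i j : Fin n, pd (fun y =>
        (if i = j then (1:ℝ) else 0) - pd f i y * pd f j y / (1 + ∑ k, pd f k y ^ 2)) p x
      = 0 - ((pd (pd f i) p x * pd f j x + pd f i x * pd (pd f j) p x)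
              * (1 + ∑ k, pd f k x ^ 2)
            - pd f i x * pd f j x * (2 * ∑ k, pd f k x * pd (pd f k) p x))
          / (1 + ∑ k, pd f k x ^ 2) ^ 2 := by
    intro i j
    have e1 : pd (fun y =>
          (if i = j then (1:ℝ) else 0) - pd f i y * pd f j y / (1 + ∑ k, pd f k y ^ 2)) p x
        = pd (fun _ => if i = j then (1:ℝ) else 0) p x
          - pd (fun y => pd f i y * pd f j y / (1 + ∑ k, pd f k y ^ 2)) p x :=
      pd_sub (differentiableAt_const _) (hdivD i j x)
    have e2 : pd (fun y => pd f i y * pd f j y / (1 + ∑ k, pd f k y ^ 2)) p x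
        = (pd (fun y => pd f i y * pd f j y) p x * (1 + ∑ k, pd f k x ^ 2)
            - pd f i x * pd f j x * pd (fun y => 1 + ∑ k, pd f k y ^ 2) p x)
          / (1 + ∑ k, pd f k x ^ 2) ^ 2 :=
      pd_div (hprod i j x) (hSd x) (hS0 x)
    have e3 : pd (fun y => pd f i y * pd f j y) p x
        = pd (pd f i) p x * pd f j x + pd f i x * pd (pd f j) p x :=
      pd_mul ((hu i) x) ((hu j) x)
    rw [e1, e2, e3, hpdS, pd_const]
  -- the two sides of the equation, as functions
  have hfuneq : (fun y => ∑ i, ∑ j,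
        ((if i = j then (1:ℝ) else 0) - pd f i y * pd f j y / (1 + ∑ k, pd f k y ^ 2))
          * pd (pd f j) i y)
      = fun y => -f y + ∑ i, y i * pd f i y + lam * Real.sqrt (1 + ∑ i, pd f i y ^ 2) := by
    funext y
    rw [← heq y]
    exact Finset.sum_congr rfl fun i _ => Finset.sum_congr rfl fun j _ => by
      rw [gInv_apply]
  -- derivative of the left-hand side
  have hEB : ∀ i j : Fin n, Differentiable ℝ (fun y =>
      ((if i = j then (1:ℝ) else 0) - pd f i y * pd f j y / (1 + ∑ k, pd f k y ^ 2))
        * pd (pd f j) i y) := fun i j => (hEd i j).mul (hB i j)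
  have hL : pd (fun y => ∑ i, ∑ j,
        ((if i = j then (1:ℝ) else 0) - pd f i y * pd f j y / (1 + ∑ k, pd f k y ^ 2))
          * pd (pd f j) i y) p x
      = ∑ i, ∑ j,
          ((0 - ((pd (pd f i) p x * pd f j x + pd f i x * pd (pd f j) p x)
                  * (1 + ∑ k, pd f k x ^ 2)
                - pd f i x * pd f j x * (2 * ∑ k, pd f k x * pd (pd f k) p x))
              / (1 + ∑ k, pd f k x ^ 2) ^ 2) * pd (pd f j) i x
            + ((if i = j then (1:ℝ) else 0)
                - pd f i x * pd f j x / (1 + ∑ k, pd f k x ^ 2))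
              * pd (pd (pd f j) i) p x) := by
    have e1 : pd (fun y => ∑ i, ∑ j,
          ((if i = j then (1:ℝ) else 0) - pd f i y * pd f j y / (1 + ∑ k, pd f k y ^ 2))
            * pd (pd f j) i y) p x
        = ∑ i, pd (fun y => ∑ j,
            ((if i = j then (1:ℝ) else 0) - pd f i y * pd f j y / (1 + ∑ k, pd f k y ^ 2))
              * pd (pd f j) i y) p x :=
      pd_sum _ _ fun i _ => (Differentiable.fun_sum fun j _ => hEB i j) x
    rw [e1]
    refine Finset.sum_congr rfl fun i _ => ?_
    have e2 : pd (fun y => ∑ j,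
          ((if i = j then (1:ℝ) else 0) - pd f i y * pd f j y / (1 + ∑ k, pd f k y ^ 2))
            * pd (pd f j) i y) p x
        = ∑ j, pd (fun y =>
            ((if i = j then (1:ℝ) else 0) - pd f i y * pd f j y / (1 + ∑ k, pd f k y ^ 2))
              * pd (pd f j) i y) p x :=
      pd_sum _ _ fun j _ => (hEB i j) x
    rw [e2]
    refine Finset.sum_congr rfl fun j _ => ?_
    have e3 : pd (fun y =>
          ((if i = j then (1:ℝ) else 0) - pd f i y * pd f j y / (1 + ∑ k, pd f k y ^ 2))
            * pd (pd f j) i y) p x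
        = pd (fun y =>
              (if i = j then (1:ℝ) else 0) - pd f i y * pd f j y / (1 + ∑ k, pd f k y ^ 2)) p x
            * pd (pd f j) i x
          + ((if i = j then (1:ℝ) else 0) - pd f i x * pd f j x / (1 + ∑ k, pd f k x ^ 2))
            * pd (pd (pd f j) i) p x :=
      pd_mul ((hEd i j) x) ((hB i j) x)
    rw [e3, hpdE i j]
  -- derivative of the right-hand side
  have hR : pd (fun y => -f y + ∑ i, y i * pd f i y
        + lam * Real.sqrt (1 + ∑ i, pd f i y ^ 2)) p x
      = -pd f p x + (pd f p x + ∑ i, x i * pd (pd f i) p x)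
        + lam * (2 * (∑ k, pd f k x * pd (pd f k) p x)
            / (2 * Real.sqrt (1 + ∑ k, pd f k x ^ 2))) := by
    have d1 : DifferentiableAt ℝ (fun y => -f y + ∑ i, y i * pd f i y) x :=
      ((hfd x).neg).add ((Differentiable.fun_sum fun i _ => (hcoord i).mul (hu i)) x)
    have d2 : DifferentiableAt ℝ
        (fun y => lam * Real.sqrt (1 + ∑ i, pd f i y ^ 2)) x :=
      (differentiableAt_const _).mul ((hSd x).sqrt (hS0 x))
    have e1 : pd (fun y => -f y + ∑ i, y i * pd f i y
          + lam * Real.sqrt (1 + ∑ i, pd f i y ^ 2)) p x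
        = pd (fun y => -f y + ∑ i, y i * pd f i y) p x
          + pd (fun y => lam * Real.sqrt (1 + ∑ i, pd f i y ^ 2)) p x :=
      pd_add d1 d2
    have e2 : pd (fun y => -f y + ∑ i, y i * pd f i y) p x
        = pd (fun y => -f y) p x + pd (fun y => ∑ i, y i * pd f i y) p x :=
      pd_add ((hfd x).neg) ((Differentiable.fun_sum fun i _ => (hcoord i).mul (hu i)) x)
    have e3 : pd (fun y => -f y) p x = -pd f p x := pd_neg
    have e4 : pd (fun y => ∑ i, y i * pd f i y) p x
        = ∑ i, ((if i = p then (1:ℝ) else 0) * pd f i x + x i * pd (pd f i) p x) := by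
      have s1 : pd (fun y => ∑ i, y i * pd f i y) p x
          = ∑ i, pd (fun y => y i * pd f i y) p x :=
        pd_sum _ _ fun i _ => ((hcoord i) x).mul ((hu i) x)
      rw [s1]
      refine Finset.sum_congr rfl fun i _ => ?_
      have := pd_mul (g := fun y : Fin n → ℝ => y i) (h := pd f i)
        (p := p) (x := x) ((hcoord i) x) ((hu i) x)
      rw [this, pd_coord]
    have e5 : ∑ i, ((if i = p then (1:ℝ) else 0) * pd f i x + x i * pd (pd f i) p x)
        = pd f p x + ∑ i, x i * pd (pd f i) p x := by
      rw [Finset.sum_add_distrib]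
      congr 1
      have : ∀ i : Fin n, (if i = p then (1:ℝ) else 0) * pd f i x
          = if i = p then pd f p x else 0 := by
        intro i; split_ifs with hip <;> simp [hip]
      rw [Finset.sum_congr rfl fun i _ => this i]
      simp [Finset.sum_ite_eq']
    have e6 : pd (fun y => lam * Real.sqrt (1 + ∑ i, pd f i y ^ 2)) p x
        = lam * (2 * (∑ k, pd f k x * pd (pd f k) p x)
            / (2 * Real.sqrt (1 + ∑ k, pd f k x ^ 2))) := by
      have s1 : pd (fun y => lam * Real.sqrt (1 + ∑ i, pd f i y ^ 2)) p x
          = lam * pd (fun y => Real.sqrt (1 + ∑ i, pd f i y ^ 2)) p x :=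
        pd_const_mul ((hSd x).sqrt (hS0 x)) lam
      have s2 : pd (fun y => Real.sqrt (1 + ∑ i, pd f i y ^ 2)) p x
          = pd (fun y => 1 + ∑ k, pd f k y ^ 2) p x
            / (2 * Real.sqrt (1 + ∑ k, pd f k x ^ 2)) :=
        pd_sqrt (hSd x) (hS0 x)
      rw [s1, s2, hpdS]
    rw [e1, e2, e3, e4, e5, e6]
  -- equate the derivatives
  have hpdLR := congrArg (fun F => pd F p x) hfuneq
  rw [hL, hR] at hpdLR
  -- rewrite the goal and conclude by the algebraic identity
  simp only [gInv_apply, h3, h2]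
  exact main_algebra (fun i => pd f i x) (fun i => pd (pd f i) p x)
    (fun i j => pd (pd f j) i x) (fun i j => pd (pd (pd f j) i) p x)
    hbsym _ rfl (hS0 x) _ lam hsqrt0 _ _ _ rfl hpdLR
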